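/- If c → d (d is obtained from c by a sequence of firings), then min(supp(stab(c))) ≤ min(supp(d)). -/
import Mathlib


/-- `c'` is obtained from `c` by firing at vertex `j`. -/
def FireAt (c : ℤ → ℕ) (j : ℤ) (c' : ℤ → ℕ) : Prop :=
  2 ≤ c j ∧ c' (j - 1) = c (j - 1) + 1 ∧ c' (j + 1) = c (j + 1) + 1 ∧ c' j = c j - 2 ∧
    ∀ i : ℤ, i ≠ j - 1 → i ≠ j → i ≠ j + 1 → c' i = c i

/-- a single chip-firing move -/
def Step (c c' : ℤ → ℕ) : Prop := ∃ j, FireAt c j c'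

/-- reachability by a (possibly empty) sequence of firings -/
def Reaches : (ℤ → ℕ) → (ℤ → ℕ) → Prop := Relation.ReflTransGen Step

/-- a configuration is stable if no vertex has two chips -/
def Stable (c : ℤ → ℕ) : Prop := ∀ i : ℤ, c i ≤ 1

def fireFn (c : ℤ → ℕ) (j : ℤ) : ℤ → ℕ := fun i =>
  if i = j - 1 then c (j - 1) + 1 else if i = j + 1 then c (j + 1) + 1
  else if i = j then c j - 2 else c i

lemma fireFn_apply (c : ℤ → ℕ) (j i : ℤ) :
    fireFn c j i = c i + (if i = j - 1 then 1 else 0) + (if i = j + 1 then 1 else 0)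
      - (if i = j then 2 else 0) := by
  unfold fireFn
  split_ifs <;> subst_vars <;> omega

lemma fireAt_fireFn {c : ℤ → ℕ} {j : ℤ} (h : 2 ≤ c j) : FireAt c j (fireFn c j) := by
  refine ⟨h, ?_, ?_, ?_, ?_⟩
  · rw [fireFn_apply]; split_ifs <;> omega
  · rw [fireFn_apply]; split_ifs <;> omega
  · rw [fireFn_apply]; split_ifs <;> omega
  · intro i h1 h2 h3; rw [fireFn_apply]; split_ifs <;> omega

lemma fireAt_eq {c c' : ℤ → ℕ} {j : ℤ} (h : FireAt c j c') : c' = fireFn c j := by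
  obtain ⟨h0, h1, h2, h3, h4⟩ := h
  funext i
  unfold fireFn
  split_ifs with a b e
  · subst a; exact h1
  · subst b; exact h2
  · subst e; exact h3
  · exact h4 i a e b

lemma fireFn_comm {c : ℤ → ℕ} {j k : ℤ} (h : j ≠ k) (hj : 2 ≤ c j) (hk : 2 ≤ c k) :
    fireFn (fireFn c j) k = fireFn (fireFn c k) j := by
  funext i
  rw [fireFn_apply, fireFn_apply, fireFn_apply, fireFn_apply]
  split_ifs <;> subst_vars <;> omega

lemma fireFn_ge {c : ℤ → ℕ} {j k : ℤ} (h : j ≠ k) : c j ≤ fireFn c k j := by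
  rw [fireFn_apply]
  split_ifs <;> omega

lemma step_min {d d' : ℤ → ℕ} (h : Step d d') :
    ∀ i : ℤ, 0 < d i → ∃ i' : ℤ, 0 < d' i' ∧ i' ≤ i := by
  obtain ⟨j, hf⟩ := h
  have hd' := fireAt_eq hf
  subst hd'
  intro i hi
  by_cases hij : i = j
  · subst hij
    refine ⟨i - 1, ?_, by omega⟩
    rw [fireFn_apply]; split_ifs <;> omega
  · refine ⟨i, ?_, le_refl i⟩
    rw [fireFn_apply]; split_ifs <;> omega

lemma reaches_min {d e : ℤ → ℕ} (h : Reaches d e) :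
    ∀ i : ℤ, 0 < d i → ∃ i' : ℤ, 0 < e i' ∧ i' ≤ i := by
  induction h with
  | refl => exact fun i hi => ⟨i, hi, le_refl i⟩
  | tail _ hstep ih =>
    intro i hi
    obtain ⟨i1, hi1, hle1⟩ := ih i hi
    obtain ⟨i2, hi2, hle2⟩ := step_min hstep i1 hi1
    exact ⟨i2, hi2, hle2.trans hle1⟩

lemma abelian {e : ℤ → ℕ} (hstable : Stable e) :
    ∀ c : ℤ → ℕ, Reaches c e → ∀ c' : ℤ → ℕ, Step c c' → Reaches c' e := by
  intro c hce
  induction hce using Relation.ReflTransGen.head_induction_on with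
  | refl =>
    intro c' ⟨j, hj, _⟩
    exact absurd (hstable j) (by omega)
  | head hstep htail ih =>
    rename_i a b
    intro c' hc'
    obtain ⟨j, hj⟩ := hc'
    obtain ⟨k, hk⟩ := hstep
    by_cases hjk : j = k
    · subst hjk
      rw [fireAt_eq hj, ← fireAt_eq hk]
      exact htail
    · have hb := fireAt_eq hk
      have hc'eq := fireAt_eq hj
      have h2j : 2 ≤ b j := by
        rw [hb]; exact le_trans hj.1 (fireFn_ge hjk)
      have h2k : 2 ≤ c' k := by
        rw [hc'eq]; exact le_trans hk.1 (fireFn_ge (Ne.symm hjk))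
      have hstep2 : Step b (fireFn b j) := ⟨j, fireAt_fireFn h2j⟩
      have hreach := ih _ hstep2
      have hstep3 : Step c' (fireFn c' k) := ⟨k, fireAt_fireFn h2k⟩
      have heq : fireFn c' k = fireFn b j := by
        rw [hc'eq, hb, fireFn_comm hjk hj.1 hk.1]
      exact Relation.ReflTransGen.head hstep3 (heq ▸ hreach)

theorem stmt_12 (c d : ℤ → ℕ) (hc : (Function.support c).Finite)
    (hcd : Reaches c d)
    (e : ℤ → ℕ) (hce : Reaches c e) (hstable : Stable e) :
    ∀ i : ℤ, 0 < d i → ∃ i' : ℤ, 0 < e i' ∧ i' ≤ i := by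
  have hde : Reaches d e := by
    induction hcd with
    | refl => exact hce
    | tail _ hstep ih => exact abelian hstable _ ih _ hstep
  exact reaches_min hde
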